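/- arXiv:2006.10529 — 3 statements merged into one kernel-verified Lean document; each statement's English description precedes it below -/
import Mathlib

section
/- The output of a deep ReLU network equals the sum over all paths of the product of: the input coordinate at the path's starting node, the product of gating values along the path, and the product of weights along the path. Equivalently, ŷ_Θ(x) = ⟨φ_{x,Θ}, v_Θ⟩, the inner product of the neural path feature and the neural path value. -/
/-!
Read the output as a linear functional `u` of the last hidden layer `q D * G D` and induct on the
depth, for all `u` at once. Unfolding one layer, `u` applied to layer `k + 2` is the functional
`m ↦ ∑ i, u i * G (k + 2) i * Wmid (k + 1) i m` applied to layer `k + 1`; extending a path by the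
unit `i` multiplies its activity by `G (k + 2) i`, and its value absorbs `Wmid (k + 1) i m * u i`.
-/

open Finset

theorem Fin.sum_univ_pi_eq_sum_snoc {M α : Type*} [AddCommMonoid M] [Fintype α] {k : ℕ}
    (f : (Fin (k + 1) → α) → M) :
    ∑ p, f p = ∑ a, ∑ p : Fin k → α, f (Fin.snoc p a) := by
  rw [← (Fin.snocEquiv fun _ => α).sum_comp, Fintype.sum_prod_type]
  rfl

namespace ReLUNet

variable {R : Type*} [CommSemiring R] {din w k : ℕ}

/-! A path of length `k + 1` is a pair `(j, p)`: the input node `j`, and `p l` the unit it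
visits in hidden layer `l + 1`. -/

def pathActivity (G : ℕ → Fin w → R) (p : Fin (k + 1) → Fin w) : R :=
  ∏ l : Fin (k + 1), G ((l : ℕ) + 1) (p l)

def pathFeature (x : Fin din → R) (G : ℕ → Fin w → R) (p : Fin din × (Fin (k + 1) → Fin w)) :
    R :=
  x p.1 * pathActivity G p.2

def pathValue (Win : Fin w → Fin din → R) (Wmid : ℕ → Fin w → Fin w → R) (Wout : Fin w → R)
    (p : Fin din × (Fin (k + 1) → Fin w)) : R :=
  Win (p.2 0) p.1 * (∏ l : Fin k, Wmid ((l : ℕ) + 1) (p.2 l.succ) (p.2 l.castSucc)) *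
    Wout (p.2 (Fin.last k))

theorem pathActivity_snoc (G : ℕ → Fin w → R) (p : Fin (k + 1) → Fin w) (i : Fin w) :
    pathActivity G (Fin.snoc p i : Fin (k + 2) → Fin w) = pathActivity G p * G (k + 2) i := by
  simp [pathActivity, Fin.prod_univ_castSucc]

theorem pathValue_snoc (Win : Fin w → Fin din → R) (Wmid : ℕ → Fin w → Fin w → R)
    (Wout : Fin w → R) (j : Fin din) (p : Fin (k + 1) → Fin w) (i : Fin w) :
    pathValue Win Wmid Wout (j, (Fin.snoc p i : Fin (k + 2) → Fin w))
      = pathValue Win Wmid (Wmid (k + 1) i) (j, p) * Wout i := by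
  have h0 : (Fin.snoc p i : Fin (k + 2) → Fin w) 0 = p 0 :=
    Fin.snoc_castSucc (α := fun _ => Fin w) i p 0
  simp only [pathValue, Fin.prod_univ_castSucc, Fin.succ_castSucc, Fin.succ_last,
    Fin.snoc_castSucc, Fin.snoc_last, Fin.val_last, Fin.val_castSucc, h0]
  ring

theorem sum_mul_hidden_eq_sum_pathFeature_mul_pathValue {D : ℕ} (x : Fin din → R)
    (Win : Fin w → Fin din → R) (Wmid : ℕ → Fin w → Fin w → R) (q G : ℕ → Fin w → R)
    (hq1 : ∀ i, q 1 i = ∑ j, Win i j * x j)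
    (hqs : ∀ l, 1 ≤ l → l + 1 ≤ D → ∀ i, q (l + 1) i = ∑ j, Wmid l i j * (q l j * G l j))
    (hk : k + 1 ≤ D) (Wout : Fin w → R) :
    ∑ i, Wout i * (q (k + 1) i * G (k + 1) i)
      = ∑ p : Fin din × (Fin (k + 1) → Fin w), pathFeature x G p * pathValue Win Wmid Wout p := by
  induction k generalizing Wout with
  | zero =>
    rw [Fintype.sum_prod_type, Finset.sum_comm,
      ← (Equiv.funUnique (Fin 1) (Fin w)).symm.sum_comp]
    refine Finset.sum_congr rfl fun i _ => ?_
    simp only [pathFeature, pathActivity, pathValue, hq1, Finset.sum_mul, Finset.mul_sum,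
      Fin.prod_univ_succ, Fin.prod_univ_zero, Equiv.funUnique_symm_apply, uniqueElim_const,
      Fin.val_zero, mul_one]
    refine Finset.sum_congr rfl fun j _ => ?_
    ring
  | succ k ih =>
    calc ∑ i, Wout i * (q (k + 2) i * G (k + 2) i)
        = ∑ i, Wout i * G (k + 2) i * ∑ m, Wmid (k + 1) i m * (q (k + 1) m * G (k + 1) m) := by
          refine Finset.sum_congr rfl fun i _ => ?_
          rw [hqs (k + 1) (by omega) (by omega)]
          ring
      _ = ∑ i, ∑ p : Fin din × (Fin (k + 1) → Fin w), Wout i * G (k + 2) i *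
            (pathFeature x G p * pathValue Win Wmid (Wmid (k + 1) i) p) := by
          simp only [ih (by omega), Finset.mul_sum]
      _ = ∑ i, ∑ p : Fin din × (Fin (k + 1) → Fin w),
            pathFeature x G (p.1, (Fin.snoc p.2 i : Fin (k + 2) → Fin w))
              * pathValue Win Wmid Wout (p.1, (Fin.snoc p.2 i : Fin (k + 2) → Fin w)) := by
          simp only [pathFeature, pathActivity_snoc, pathValue_snoc]
          refine Finset.sum_congr rfl fun i _ => Finset.sum_congr rfl fun p _ => ?_
          ring
      _ = _ := by
          simp only [Fintype.sum_prod_type, Fin.sum_univ_pi_eq_sum_snoc (k := k + 1)]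
          exact Finset.sum_comm

theorem pathActivity_eq_prod_range (G : ℕ → Fin w → R) (p : Fin (k + 1) → Fin w) :
    pathActivity G p
      = ∏ l ∈ range (k + 1), G (l + 1) (p ⟨l % (k + 1), Nat.mod_lt l k.succ_pos⟩) := by
  rw [← Fin.prod_univ_eq_prod_range]
  simp (disch := omega) only [pathActivity, Nat.mod_eq_of_lt]

theorem pathValue_eq_prod_range (Win : Fin w → Fin din → R) (Wmid : ℕ → Fin w → Fin w → R)
    (Wout : Fin w → R) (p : Fin din × (Fin (k + 1) → Fin w)) :
    pathValue Win Wmid Wout p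
      = Win (p.2 ⟨0 % (k + 1), Nat.mod_lt 0 k.succ_pos⟩) p.1 *
        (∏ l ∈ range k,
          Wmid (l + 1) (p.2 ⟨(l + 1) % (k + 1), Nat.mod_lt _ k.succ_pos⟩)
            (p.2 ⟨l % (k + 1), Nat.mod_lt l k.succ_pos⟩)) *
        Wout (p.2 ⟨k % (k + 1), Nat.mod_lt _ k.succ_pos⟩) := by
  rw [← Fin.prod_univ_eq_prod_range]
  simp (disch := omega) only [pathValue, Nat.mod_eq_of_lt]
  rfl

end ReLUNet

/-- `D` is the number of hidden layers (depth d = D + 1 weight layers),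
`Win`, `Wmid l`, `Wout` are the weights of the input, intermediate and output layers,
`q l i` is the pre-activation of unit `i` of hidden layer `l ∈ {1,…,D}`, and
`G l i` the corresponding ReLU gate. -/
theorem dnn_output_eq_npf_npv_inner_general (din w D : ℕ) (hD : 0 < D)
    (x : Fin din → ℝ)
    (Win : Fin w → Fin din → ℝ)
    (Wmid : ℕ → Fin w → Fin w → ℝ)
    (Wout : Fin w → ℝ)
    (q G : ℕ → Fin w → ℝ)
    (hq1 : ∀ i, q 1 i = ∑ j, Win i j * x j)
    (hqs : ∀ l, 1 ≤ l → l + 1 ≤ D → ∀ i, q (l+1) i = ∑ j, Wmid l i j * (q l j * G l j))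
    (yhat : ℝ)
    (hy : yhat = ∑ j, Wout j * (q D j * G D j)) :
    yhat = ∑ p : Fin din × (Fin D → Fin w),
      (x p.1 * ∏ l ∈ Finset.range D, G (l+1) (p.2 ⟨l % D, Nat.mod_lt l hD⟩)) *
      (Win (p.2 ⟨0 % D, Nat.mod_lt 0 hD⟩) p.1 *
        (∏ l ∈ Finset.range (D-1),
          Wmid (l+1) (p.2 ⟨(l+1) % D, Nat.mod_lt _ hD⟩) (p.2 ⟨l % D, Nat.mod_lt l hD⟩)) *
        Wout (p.2 ⟨(D-1) % D, Nat.mod_lt _ hD⟩)) := by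
  obtain ⟨k, rfl⟩ : ∃ k, D = k + 1 := ⟨D - 1, by omega⟩
  rw [hy, ReLUNet.sum_mul_hidden_eq_sum_pathFeature_mul_pathValue x Win Wmid q G hq1 hqs le_rfl]
  refine Finset.sum_congr rfl fun p _ => ?_
  rw [ReLUNet.pathFeature, ReLUNet.pathActivity_eq_prod_range, ReLUNet.pathValue_eq_prod_range,
    Nat.add_sub_cancel]

/-- The output of a deep ReLU network equals the sum over all paths of
(input coordinate at the path's start) × (product of gates on the path) ×
(product of weights on the path), i.e. ŷ = ⟨φ_{x,Θ}, v_Θ⟩.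
Here `D` is the number of hidden layers (depth d = D + 1 weight layers),
`Win`, `Wmid l`, `Wout` are the weights of the input, intermediate and output layers,
`q l i` is the pre-activation of unit `i` of hidden layer `l ∈ {1,…,D}`, and
`G l i` the corresponding ReLU gate.  A path is a pair of an input node and a choice
of one hidden unit per hidden layer. -/
theorem dnn_output_eq_npf_npv_inner (din w D : ℕ) (hD : 0 < D)
    (x : Fin din → ℝ)
    (Win : Fin w → Fin din → ℝ)
    (Wmid : ℕ → Fin w → Fin w → ℝ)
    (Wout : Fin w → ℝ)
    (q G : ℕ → Fin w → ℝ)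
    (hq1 : ∀ i, q 1 i = ∑ j, Win i j * x j)
    (hqs : ∀ l, 1 ≤ l → l + 1 ≤ D → ∀ i, q (l+1) i = ∑ j, Wmid l i j * (q l j * G l j))
    (hG : ∀ l i, G l i = if 0 < q l i then (1:ℝ) else 0)
    (yhat : ℝ)
    (hy : yhat = ∑ j, Wout j * (q D j * G D j)) :
    yhat = ∑ p : Fin din × (Fin D → Fin w),
      (x p.1 * ∏ l ∈ Finset.range D, G (l+1) (p.2 ⟨l % D, Nat.mod_lt l hD⟩)) *
      (Win (p.2 ⟨0 % D, Nat.mod_lt 0 hD⟩) p.1 *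
        (∏ l ∈ Finset.range (D-1),
          Wmid (l+1) (p.2 ⟨(l+1) % D, Nat.mod_lt _ hD⟩) (p.2 ⟨l % D, Nat.mod_lt l hD⟩)) *
        Wout (p.2 ⟨(D-1) % D, Nat.mod_lt _ hD⟩)) :=
  dnn_output_eq_npf_npv_inner_general din w D hD x Win Wmid Wout q G hq1 hqs yhat hy
end

section
/- The neural path kernel matrix factors as a Hadamard product: H_Θ = Σ ⊙ Λ_Θ, where H_Θ(s,s') = ⟨φ_{x_s,Θ}, φ_{x_{s'},Θ}⟩, Σ(s,s') = ⟨x_s, x_{s'}⟩ is the input Gram matrix, and Λ_Θ(s,s') is the number of paths active for both inputs s and s' divided by d_in. -/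
/-! Since the activity does not see the input node, the path sum
`∑_{(i,h)} x_s(i) x_{s'}(i) A_s(h) A_{s'}(h)` splits as `⟨x_s, x_{s'}⟩ · ∑_h A_s(h) A_{s'}(h)`.
For `{0,1}`-valued activities the second factor counts the hidden tuples active for both inputs,
and each of them is the hidden part of exactly `d_in` paths. -/

open Finset

theorem sum_mul_eq_ncard_of_zero_or_one {ι R : Type*} [Fintype ι] [Semiring R]
    {f g : ι → R} (hf : ∀ i, f i = 0 ∨ f i = 1) (hg : ∀ i, g i = 0 ∨ g i = 1) :
    ∑ i, f i * g i = {i | f i = 1 ∧ g i = 1}.ncard := by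
  classical
  rw [Set.ncard_eq_toFinset_card', Set.toFinset_ofPred, ← sum_boole]
  refine sum_congr rfl fun i _ => ?_
  rcases hf i with hfi | hfi <;> rcases hg i with hgi | hgi <;> simp [hfi, hgi]

theorem ncard_setOf_snd {α β : Type*} [Finite α] (P : β → Prop) :
    {p : α × β | P p.2}.ncard = Nat.card α * {b | P b}.ncard := by
  rw [← Set.ncard_univ, ← Set.ncard_prod, Set.univ_prod]
  rfl

theorem sum_prod_mul_mul_mul {ι κ R : Type*} [Fintype ι] [Fintype κ] [CommSemiring R]
    (u v : ι → R) (a b : κ → R) :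
    ∑ p : ι × κ, u p.1 * a p.2 * (v p.1 * b p.2) = (∑ i, u i * v i) * ∑ k, a k * b k := by
  rw [Fintype.sum_prod_type, Fintype.sum_mul_sum]
  exact sum_congr rfl fun i _ => sum_congr rfl fun k _ => by ring

/-- The neural path kernel factors as a Hadamard product H_Θ = Σ ⊙ Λ_Θ :
H(s,s') = ⟨x_s, x_{s'}⟩ · Λ(s,s'), where Λ(s,s') is the number of paths active
for both inputs divided by d_in.  Paths are pairs (input node, hidden-node tuple),
and the activity `A` depends only on the hidden part. -/
theorem npk_hadamard_factorisation (din n : ℕ) (hdin : 0 < din)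
    (Hidden : Type*) [Fintype Hidden]
    (x : Fin n → Fin din → ℝ) (A : Fin n → Hidden → ℝ)
    (hA : ∀ s h, A s h = 0 ∨ A s h = 1)
    (φ : Fin n → Fin din × Hidden → ℝ)
    (hφ : ∀ s p, φ s p = x s p.1 * A s p.2)
    (H Sig Λ : Fin n → Fin n → ℝ)
    (hH : ∀ s s', H s s' = ∑ p, φ s p * φ s' p)
    (hSig : ∀ s s', Sig s s' = ∑ i, x s i * x s' i)
    (hΛ : ∀ s s', Λ s s' =
      (Set.ncard {p : Fin din × Hidden | A s p.2 = 1 ∧ A s' p.2 = 1} : ℝ) / din) :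
    ∀ s s', H s s' = Sig s s' * Λ s s' := by
  intro s s'
  have hdin' : (din : ℝ) ≠ 0 := by positivity
  rw [hH, hSig, hΛ, ncard_setOf_snd fun h => A s h = 1 ∧ A s' h = 1,
    Nat.card_fin, Nat.cast_mul, mul_div_cancel_left₀ _ hdin', ← sum_mul_eq_ncard_of_zero_or_one (hA s) (hA s')]
  simp only [hφ, sum_prod_mul_mul_mul]
end

section
/- If the network weights in each layer are initialized i.i.d. from a symmetric Bernoulli distribution over {-σ, +σ}, then for any two distinct paths p₁ ≠ p₂, the expected inner product of the NPV gradients vanishes: E[⟨φ_{p₁}, φ_{p₂}⟩] = 0, where φ_p = (∂_θ v_Θ(p), θ ∈ Θ). -/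
/-!
Since `p₁ ≠ p₂`, the paths use different weights `θ₀ = (l₀, p₁ l₀) ≠ (l₀, p₂ l₀)` in some layer
`l₀`. A term of `⟨φ_{p₁}, φ_{p₂}⟩` is nonzero only at a weight shared by both paths, hence in a
layer other than `l₀`; there `∂v(p₁)` contains the factor `θ₀` and `∂v(p₂)` does not. So the inner
product is `θ₀` times a function of the other weights, and by independence its expectation is
`E[θ₀] = 0` times the expectation of that function.
-/

open MeasureTheory ProbabilityTheory Finset

section Independence

variable {Ω ι β : Type*} [MeasurableSpace Ω] {μ : Measure Ω} [MeasurableSpace β]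
  [Fintype ι] [DecidableEq ι] {X : ι → Ω → β}

theorem ProbabilityTheory.iIndepFun.indepFun_update (hindep : iIndepFun X μ)
    (hmeas : ∀ i, Measurable (X i)) (i : ι) (b : β) :
    IndepFun (fun ω ↦ Function.update (fun j ↦ X j ω) i b) (X i) μ := by
  have key := (hindep.indepFun_finset (univ.erase i) {i} (by simp) hmeas).comp
    (measurable_updateFinset (x := fun _ ↦ b))
    (measurable_pi_apply (⟨i, mem_singleton_self i⟩ : ({i} : Finset ι)))
  convert key using 1
  · ext ω j
    by_cases hj : j = i <;> simp [hj, Function.updateFinset]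
  · rfl

/-- No integrability is needed: the product formula for independent real random variables holds
for merely measurable ones, with the junk value `0` for non-integrable integrals. -/
theorem integral_mul_comp_update_eq_zero {X : ι → Ω → ℝ} (hindep : iIndepFun X μ)
    (hmeas : ∀ i, Measurable (X i)) {i : ι} (hmean : ∫ ω, X i ω ∂μ = 0) (a : ℝ)
    {Φ : (ι → ℝ) → ℝ} (hΦ : Measurable Φ) :
    ∫ ω, X i ω * Φ (Function.update (fun j ↦ X j ω) i a) ∂μ = 0 := by
  have hind : IndepFun (X i) (fun ω ↦ Φ (Function.update (fun j ↦ X j ω) i a)) μ :=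
    ((hindep.indepFun_update hmeas i a).comp hΦ measurable_id).symm
  have hupd : Measurable fun ω ↦ Function.update (fun j ↦ X j ω) i a :=
    measurable_update_left.comp (measurable_pi_lambda _ hmeas)
  rw [hind.integral_fun_mul_eq_mul_integral (hmeas i).aestronglyMeasurable
    (hΦ.comp hupd).aestronglyMeasurable, hmean, zero_mul]

end Independence

section NeuralPathValue

variable {L W : Type*} [Fintype L] [DecidableEq L] [DecidableEq W]

/-- `npvGrad p x (l, j)` is `∂_{(l,j)} v_x(p)`, where `v_x(p) = ∏ l, x (l, p l)` is the value of
the path `p`, which uses the weight `(l, p l)` in layer `l`. -/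
def npvGrad (p : L → W) (x : L × W → ℝ) (θ : L × W) : ℝ :=
  if p θ.1 = θ.2 then ∏ l ∈ univ.erase θ.1, x (l, p l) else 0

def npvGradInner [Fintype W] (p₁ p₂ : L → W) (x : L × W → ℝ) : ℝ :=
  ∑ l, ∑ j, npvGrad p₁ x (l, j) * npvGrad p₂ x (l, j)

theorem measurable_npvGrad (p : L → W) (θ : L × W) : Measurable fun x ↦ npvGrad p x θ := by
  unfold npvGrad
  split_ifs
  · exact Finset.measurable_prod _ fun l _ ↦ measurable_pi_apply _
  · exact measurable_const

theorem measurable_npvGradInner [Fintype W] (p₁ p₂ : L → W) :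
    Measurable (npvGradInner p₁ p₂) :=
  Finset.measurable_sum _ fun l _ ↦ Finset.measurable_sum _ fun j _ ↦
    (measurable_npvGrad p₁ (l, j)).mul (measurable_npvGrad p₂ (l, j))

theorem npvGrad_update_of_ne {p : L → W} {l : L} {w : W} (h : p l ≠ w) (x : L × W → ℝ) (a : ℝ) :
    npvGrad p (Function.update x (l, w) a) = npvGrad p x := by
  ext θ
  unfold npvGrad
  congr 1
  refine prod_congr rfl fun l' _ ↦ Function.update_of_ne ?_ _ _
  intro he
  obtain ⟨rfl, rfl⟩ := Prod.ext_iff.mp he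
  exact h rfl

theorem npvGrad_eq_mul_update (p : L → W) (x : L × W → ℝ) {θ : L × W} {l : L} (h : l ≠ θ.1) :
    npvGrad p x θ = x (l, p l) * npvGrad p (Function.update x (l, p l) 1) θ := by
  unfold npvGrad
  split_ifs
  · have hl : l ∈ univ.erase θ.1 := mem_erase.mpr ⟨h, mem_univ l⟩
    rw [← mul_prod_erase _ _ hl, ← mul_prod_erase _ _ hl, Function.update_self, one_mul]
    congr 1
    refine prod_congr rfl fun l' hl' ↦ (Function.update_of_ne ?_ _ _).symm
    rintro ⟨⟩
    exact (ne_of_mem_erase hl') rfl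
  · rw [mul_zero]

theorem npvGrad_mul_npvGrad_eq_zero {p₁ p₂ : L → W} {l : L} (h : p₁ l ≠ p₂ l) (x y : L × W → ℝ)
    (j : W) : npvGrad p₁ x (l, j) * npvGrad p₂ y (l, j) = 0 := by
  unfold npvGrad
  split_ifs with h₁ h₂ <;> simp_all

theorem npvGradInner_eq_mul_update [Fintype W] {p₁ p₂ : L → W} {l : L} (h : p₁ l ≠ p₂ l)
    (x : L × W → ℝ) :
    npvGradInner p₁ p₂ x = x (l, p₁ l) * npvGradInner p₁ p₂ (Function.update x (l, p₁ l) 1) := by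
  simp only [npvGradInner, mul_sum]
  refine sum_congr rfl fun l' _ ↦ sum_congr rfl fun j _ ↦ ?_
  by_cases hl : l = l'
  · subst hl
    simp only [npvGrad_mul_npvGrad_eq_zero h, mul_zero]
  · rw [npvGrad_update_of_ne h.symm, npvGrad_eq_mul_update p₁ x hl, mul_assoc]

end NeuralPathValue

theorem expected_npv_gradient_inner_product_zero_general
    {Ω : Type*} [MeasurableSpace Ω] (μ : Measure Ω)
    (d : ℕ) (W : Type*) [Fintype W] [DecidableEq W]
    (Θ : Fin d × W → Ω → ℝ)
    (hmeas : ∀ lj, Measurable (Θ lj))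
    (hmean : ∀ lj, ∫ ω, Θ lj ω ∂μ = 0)
    (hindep : iIndepFun Θ μ)
    (p₁ p₂ : Fin d → W) (hne : p₁ ≠ p₂) :
    ∫ ω, ∑ l : Fin d, ∑ j : W,
        (if p₁ l = j then ∏ l' ∈ Finset.univ.erase l, Θ (l', p₁ l') ω else 0) *
        (if p₂ l = j then ∏ l' ∈ Finset.univ.erase l, Θ (l', p₂ l') ω else 0) ∂μ = 0 := by
  obtain ⟨l, hl⟩ := Function.ne_iff.mp hne
  calc ∫ ω, npvGradInner p₁ p₂ (fun θ ↦ Θ θ ω) ∂μ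
      = ∫ ω, Θ (l, p₁ l) ω *
          npvGradInner p₁ p₂ (Function.update (fun θ ↦ Θ θ ω) (l, p₁ l) 1) ∂μ :=
        integral_congr_ae (ae_of_all _ fun ω ↦ npvGradInner_eq_mul_update hl _)
    _ = 0 := integral_mul_comp_update_eq_zero hindep hmeas (hmean _) 1
        (measurable_npvGradInner p₁ p₂)

/-- For weights i.i.d. symmetric Bernoulli over {−σ, +σ} and distinct paths p₁ ≠ p₂,
the expected inner product of the NPV gradients vanishes:
E[⟨φ_{p₁}, φ_{p₂}⟩] = 0.  Weights are indexed by (layer, within-layer index) ∈ Fin d × W;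
a path is the choice `p l` of the weight it uses in each layer `l`, and
∂_{(l,j)} v(p) = 1_{p l = j} · ∏_{l' ≠ l} Θ(l', p l'). -/
theorem expected_npv_gradient_inner_product_zero
    {Ω : Type*} [MeasurableSpace Ω] (μ : Measure Ω) [IsProbabilityMeasure μ]
    (d : ℕ) (W : Type*) [Fintype W] [DecidableEq W]
    (σ : ℝ) (hσ : 0 < σ)
    (Θ : Fin d × W → Ω → ℝ)
    (hmeas : ∀ lj, Measurable (Θ lj))
    (hval : ∀ lj ω, Θ lj ω = σ ∨ Θ lj ω = -σ)
    (hmean : ∀ lj, ∫ ω, Θ lj ω ∂μ = 0)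
    (hindep : iIndepFun Θ μ)
    (p₁ p₂ : Fin d → W) (hne : p₁ ≠ p₂) :
    ∫ ω, ∑ l : Fin d, ∑ j : W,
        (if p₁ l = j then ∏ l' ∈ Finset.univ.erase l, Θ (l', p₁ l') ω else 0) *
        (if p₂ l = j then ∏ l' ∈ Finset.univ.erase l, Θ (l', p₂ l') ω else 0) ∂μ = 0 :=
  expected_npv_gradient_inner_product_zero_general μ d W Θ hmeas hmean hindep p₁ p₂ hne
end
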